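/- Fix j ∈ {1,…,N} and assume: (a) (D_j R_j A V, W^j) = (D_j B_j R_j V, W^j) for all V ∈ ℂ^n and all W^j ∈ ℂ^{n_j}; (d) there exists C_{D,j} > 0 with ‖D_j W^j‖_{Ω_j} ≤ C_{D,j} ‖W^j‖_{Ω_j} for all W^j ∈ ℂ^{n_j}; (e) there exists C_{DB,j} > 0 with |([D_j, B_j] V^j, W^j)| ≤ C_{DB,j} ‖V^j‖_{Ω_j} ‖W^j‖_{Ω_j} for all V^j, W^j ∈ ℂ^{n_j}; (f) there exists C_{stab,j} > 0 such that ‖U^j‖_{Ω_j} ≤ C_{stab,j} · max_{W^j ≠ 0} |(B_j U^j, W^j)| / ‖W^j‖_{Ω_j} for all U^j ∈ ℂ^{n_j}. Then for all V ∈ ℂ^n, ‖B_j⁻¹ D_j R_j A V‖_{Ω_j} ≤ (C_{stab,j} C_{DB,j} + C_{D,j}) ‖R_j V‖_{Ω_j}. -/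

import Mathlib

open Matrix
open scoped ComplexOrder

/-- Hermitian inner product `(V, W) = W* V`. -/
noncomputable def iprod {m : ℕ} (V W : Fin m → ℂ) : ℂ := star W ⬝ᵥ V

/-- Weighted norm `‖V‖_F = ((F V, V))^{1/2}` for a Hermitian positive definite `F`. -/
noncomputable def wnorm {m : ℕ} (F : Matrix (Fin m) (Fin m) ℂ) (V : Fin m → ℂ) : ℝ :=
  Real.sqrt (iprod (F.mulVec V) V).re

/-!
Testing (a) against the unit vectors gives `D R A V = D B R V`, hence
`B⁻¹ D R A V = B⁻¹ [D, B] R V + D R V`. The second term is bounded by (d). The first one,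
`U = B⁻¹ [D, B] R V`, satisfies `(B U, W) = ([D, B] R V, W)`, so (e) bounds the inf-sup quotient
of (f) by `C_DB ‖R V‖`, and (f) turns this into `‖U‖ ≤ C_stab C_DB ‖R V‖`.
-/

section WeightedNorm

variable {m : ℕ}

lemma wnorm_nonneg (F : Matrix (Fin m) (Fin m) ℂ) (V : Fin m → ℂ) : 0 ≤ wnorm F V :=
  Real.sqrt_nonneg _

lemma wnorm_eq_norm {F : Matrix (Fin m) (Fin m) ℂ} (hF : F.PosSemidef) (V : Fin m → ℂ) :
    wnorm F V = @norm _ (F.toSeminormedAddCommGroup hF).toNorm V := by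
  unfold wnorm iprod
  rw [dotProduct_comm]
  with_unfolding_all rfl

lemma wnorm_add_le {F : Matrix (Fin m) (Fin m) ℂ} (hF : F.PosSemidef) (V W : Fin m → ℂ) :
    wnorm F (V + W) ≤ wnorm F V + wnorm F W := by
  simp only [wnorm_eq_norm hF]
  exact @norm_add_le _ (F.toSeminormedAddCommGroup hF).toSeminormedAddGroup V W

lemma iprod_single_one (V : Fin m → ℂ) (i : Fin m) :
    iprod V (Pi.single i 1) = V i := by
  simp [iprod, dotProduct, Pi.single_apply, apply_ite]

lemma eq_of_forall_iprod_eq {V V' : Fin m → ℂ} (h : ∀ W, iprod V W = iprod V' W) :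
    V = V' :=
  funext fun i => by simpa only [iprod_single_one] using h (Pi.single i 1)

lemma wnorm_le_of_infSup_of_iprod_le {F B : Matrix (Fin m) (Fin m) ℂ} {U : Fin m → ℂ}
    {C c : ℝ} (hC : 0 ≤ C) (hc : 0 ≤ c)
    (hinfSup : wnorm F U ≤ C * ⨆ W : {W : Fin m → ℂ // W ≠ 0},
      ‖iprod (B *ᵥ U) W.1‖ / wnorm F W.1)
    (hU : ∀ W, ‖iprod (B *ᵥ U) W‖ ≤ c * wnorm F W) :
    wnorm F U ≤ C * c := by
  refine hinfSup.trans (mul_le_mul_of_nonneg_left ?_ hC)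
  exact Real.iSup_le (fun W => div_le_of_le_mul₀ (wnorm_nonneg F W.1) hc (hU W.1)) hc

end WeightedNorm

lemma nonsing_inv_mul_mul_eq_commutator_add {m α : Type*} [Fintype m] [DecidableEq m]
    [CommRing α] {B : Matrix m m α} (hB : IsUnit B.det) (D : Matrix m m α) :
    B⁻¹ * (D * B) = B⁻¹ * (D * B - B * D) + D := by
  rw [Matrix.mul_sub, Matrix.nonsing_inv_mul_cancel_left B D hB, sub_add_cancel]

theorem stmt4_general (n m : ℕ)
    (A : Matrix (Fin n) (Fin n) ℂ)
    (R : Matrix (Fin m) (Fin n) ℂ)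
    (D B : Matrix (Fin m) (Fin m) ℂ)
    (FF : Matrix (Fin m) (Fin m) ℂ)
    (hB : IsUnit B)
    (hFF : FF.PosDef)
    (CD CDB Cstab : ℝ) (hCDB : 0 < CDB) (hCstab : 0 < Cstab)
    (ha : ∀ (V : Fin n → ℂ) (W : Fin m → ℂ),
      iprod (D.mulVec (R.mulVec (A.mulVec V))) W
        = iprod (D.mulVec (B.mulVec (R.mulVec V))) W)
    (hd : ∀ W : Fin m → ℂ, wnorm FF (D.mulVec W) ≤ CD * wnorm FF W)
    (he : ∀ V W : Fin m → ℂ,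
      ‖iprod ((D * B - B * D).mulVec V) W‖ ≤ CDB * wnorm FF V * wnorm FF W)
    (hf : ∀ U : Fin m → ℂ,
      wnorm FF U ≤ Cstab * ⨆ W : {W : Fin m → ℂ // W ≠ 0},
        ‖iprod (B.mulVec U) W.1‖ / wnorm FF W.1) :
    ∀ V : Fin n → ℂ,
      wnorm FF ((B⁻¹ * D * R * A).mulVec V)
        ≤ (Cstab * CDB + CD) * wnorm FF (R.mulVec V) := by
  intro V
  have hBdet : IsUnit B.det := (isUnit_iff_isUnit_det B).1 hB
  set U := B⁻¹ *ᵥ ((D * B - B * D) *ᵥ (R *ᵥ V))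
  have hDRA : D *ᵥ (R *ᵥ (A *ᵥ V)) = D *ᵥ (B *ᵥ (R *ᵥ V)) :=
    eq_of_forall_iprod_eq (ha V)
  have hsplit : (B⁻¹ * D * R * A) *ᵥ V = U + D *ᵥ (R *ᵥ V) := by
    have h := congrArg (· *ᵥ (R *ᵥ V)) (nonsing_inv_mul_mul_eq_commutator_add hBdet D)
    simp only [add_mulVec, ← mulVec_mulVec] at h hDRA ⊢
    rw [hDRA, h]
  have hBU : B *ᵥ U = (D * B - B * D) *ᵥ (R *ᵥ V) := by
    rw [mulVec_mulVec, mul_nonsing_inv _ hBdet, one_mulVec]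
  have hUbound : wnorm FF U ≤ Cstab * (CDB * wnorm FF (R *ᵥ V)) :=
    wnorm_le_of_infSup_of_iprod_le hCstab.le (mul_nonneg hCDB.le (wnorm_nonneg _ _)) (hf U)
      fun W => hBU ▸ he (R *ᵥ V) W
  calc wnorm FF ((B⁻¹ * D * R * A) *ᵥ V)
      ≤ wnorm FF U + wnorm FF (D *ᵥ (R *ᵥ V)) := hsplit ▸ wnorm_add_le hFF.posSemidef _ _
    _ ≤ Cstab * (CDB * wnorm FF (R *ᵥ V)) + CD * wnorm FF (R *ᵥ V) :=
        add_le_add hUbound (hd _)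
    _ = (Cstab * CDB + CD) * wnorm FF (R *ᵥ V) := by ring

/-- under (a), (d), (e), (f),
`‖B⁻¹ D R A V‖_{Ω_j} ≤ (C_stab C_DB + C_D) ‖R V‖_{Ω_j}`. -/
theorem stmt4 (n m N : ℕ) (hn : 1 ≤ n) (hN : 1 ≤ N) (hm : 1 ≤ m)
    (A : Matrix (Fin n) (Fin n) ℂ)
    (R : Matrix (Fin m) (Fin n) ℂ)
    (D B : Matrix (Fin m) (Fin m) ℂ)
    (FF : Matrix (Fin m) (Fin m) ℂ)
    (hD : ∃ dd : Fin m → ℝ, (∀ i, 0 ≤ dd i) ∧ D = Matrix.diagonal fun i => (dd i : ℂ))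
    (hB : IsUnit B)
    (hFF : FF.PosDef)
    (CD CDB Cstab : ℝ) (hCD : 0 < CD) (hCDB : 0 < CDB) (hCstab : 0 < Cstab)
    (ha : ∀ (V : Fin n → ℂ) (W : Fin m → ℂ),
      iprod (D.mulVec (R.mulVec (A.mulVec V))) W
        = iprod (D.mulVec (B.mulVec (R.mulVec V))) W)
    (hd : ∀ W : Fin m → ℂ, wnorm FF (D.mulVec W) ≤ CD * wnorm FF W)
    (he : ∀ V W : Fin m → ℂ,
      ‖iprod ((D * B - B * D).mulVec V) W‖ ≤ CDB * wnorm FF V * wnorm FF W)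
    (hf : ∀ U : Fin m → ℂ,
      wnorm FF U ≤ Cstab * ⨆ W : {W : Fin m → ℂ // W ≠ 0},
        ‖iprod (B.mulVec U) W.1‖ / wnorm FF W.1) :
    ∀ V : Fin n → ℂ,
      wnorm FF ((B⁻¹ * D * R * A).mulVec V)
        ≤ (Cstab * CDB + CD) * wnorm FF (R.mulVec V) :=
  stmt4_general n m A R D B FF hB hFF CD CDB Cstab hCDB hCstab ha hd he hf
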